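/- arXiv:1505.00370 — 4 statements merged into one kernel-verified Lean document; each statement's English description precedes it below -/
import Mathlib

section
/- Let n, m be natural numbers with m < n and let U ∈ ℂ^{n×m} have rank m (full column rank). Then there exists a selection operator S such that SᵀU is invertible and ‖(SᵀU)⁻¹‖₂ ≤ (√(n − m + 1) / σ_min(U)) · √(4^m + 6m − 1)/3, where σ_min(U) denotes the smallest singular value of U. -/
open Matrix

/-- Spectral norm: operator norm induced by the Euclidean vector norm. -/
noncomputable def specNorm {𝕜 : Type*} [RCLike 𝕜] {a b : ℕ} (A : Matrix (Fin a) (Fin b) 𝕜) : ℝ :=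
  ‖LinearMap.toContinuousLinearMap (Matrix.toEuclideanLin A)‖

/-- Euclidean norm of a vector. -/
noncomputable def evNorm {𝕜 : Type*} [RCLike 𝕜] {a : ℕ} (f : Fin a → 𝕜) : ℝ :=
  Real.sqrt (∑ i, ‖f i‖ ^ 2)

/-- A selection operator: its columns are `m` distinct columns of the identity matrix. -/
def IsSelection {𝕜 : Type*} [RCLike 𝕜] {n m : ℕ} (S : Matrix (Fin n) (Fin m) 𝕜) : Prop :=
  ∃ p : Fin m → Fin n, Function.Injective p ∧
    S = Matrix.of fun j i => if j = p i then 1 else 0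

/-- Smallest singular value of `U`: the infimum (minimum) of `‖Ux‖₂` over unit vectors `x`. -/
noncomputable def sigmaMin {n m : ℕ} (U : Matrix (Fin n) (Fin m) ℂ) : ℝ :=
  sInf {r : ℝ | ∃ x : Fin m → ℂ, evNorm x = 1 ∧ r = evNorm (U.mulVec x)}

/-!
Take for `A` the `m × m` row-submatrix of `U` of maximal volume, i.e. with the determinant of
largest modulus. By Cramer's rule every entry of `U A⁻¹` is a quotient of two `m × m` minors of
`U`, hence has modulus at most one, so `‖U A⁻¹‖₂ ≤ √(n m)`. Together with
`σ_min(U) ‖A⁻¹ y‖ ≤ ‖U A⁻¹ y‖` this gives `‖A⁻¹‖₂ ≤ √(n m) / σ_min(U)`, and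
`9 n m ≤ (n - m + 1) (4 ^ m + 6 m - 1)` as soon as `m < n`.
-/

section EuclideanNorm

variable {𝕜 : Type*} [RCLike 𝕜] {a b : ℕ}

lemma evNorm_eq_norm_toLp (f : Fin a → 𝕜) : evNorm f = ‖WithLp.toLp 2 f‖ := by
  rw [evNorm, EuclideanSpace.norm_eq]

lemma evNorm_nonneg (f : Fin a → 𝕜) : 0 ≤ evNorm f := Real.sqrt_nonneg _

@[simp]
lemma evNorm_zero : evNorm (0 : Fin a → 𝕜) = 0 := by
  simp [evNorm]

lemma evNorm_smul (c : 𝕜) (f : Fin a → 𝕜) : evNorm (c • f) = ‖c‖ * evNorm f := by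
  simp only [evNorm_eq_norm_toLp, WithLp.toLp_smul, norm_smul]

lemma evNorm_pos {f : Fin a → 𝕜} (hf : f ≠ 0) : 0 < evNorm f := by
  rw [evNorm_eq_norm_toLp, norm_pos_iff]
  simpa

lemma specNorm_le_of_forall_evNorm_mulVec_le (A : Matrix (Fin a) (Fin b) 𝕜) {C : ℝ} (hC : 0 ≤ C)
    (h : ∀ x, evNorm (A *ᵥ x) ≤ C * evNorm x) : specNorm A ≤ C :=
  ContinuousLinearMap.opNorm_le_bound _ hC fun x => by
    simpa [evNorm_eq_norm_toLp, toLpLin_apply] using h x.ofLp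

lemma evNorm_mulVec_le_of_norm_apply_le_one (M : Matrix (Fin a) (Fin b) 𝕜)
    (hM : ∀ i k, ‖M i k‖ ≤ 1) (x : Fin b → 𝕜) :
    evNorm (M *ᵥ x) ≤ √((a : ℝ) * b) * evNorm x := by
  have hrow (i : Fin a) : ‖(M *ᵥ x) i‖ ^ 2 ≤ b * ∑ k, ‖x k‖ ^ 2 := calc
    ‖(M *ᵥ x) i‖ ^ 2 ≤ (∑ k, ‖x k‖) ^ 2 := by
      gcongr
      rw [mulVec, dotProduct]
      refine (norm_sum_le _ _).trans (Finset.sum_le_sum fun k _ => ?_)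
      rw [norm_mul]
      simpa using mul_le_mul_of_nonneg_right (hM i k) (norm_nonneg (x k))
    _ ≤ b * ∑ k, ‖x k‖ ^ 2 := by
      simpa using sq_sum_le_card_mul_sum_sq (s := Finset.univ) (f := fun k => ‖x k‖)
  have hsum : ∑ i, ‖(M *ᵥ x) i‖ ^ 2 ≤ (a * b) * ∑ k, ‖x k‖ ^ 2 := by
    calc _ ≤ ∑ _i : Fin a, b * ∑ k, ‖x k‖ ^ 2 := Finset.sum_le_sum fun i _ => hrow i
      _ = _ := by simp [mul_assoc]
  rw [evNorm, evNorm, ← Real.sqrt_mul (by positivity)]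
  exact Real.sqrt_le_sqrt hsum

end EuclideanNorm

section FullColumnRank

variable {K ι κ : Type*} [Field K] [Fintype κ]

lemma mulVec_injective_of_rank_eq_card (U : Matrix ι κ K) (hU : U.rank = Fintype.card κ) :
    Function.Injective U.mulVec := by
  have hker : Module.finrank K (LinearMap.ker U.mulVecLin) = 0 := by
    have := LinearMap.finrank_range_add_finrank_ker U.mulVecLin
    rw [Module.finrank_fintype_fun_eq_card, ← rank, hU] at this
    omega
  exact LinearMap.ker_eq_bot.mp (Submodule.finrank_eq_zero.mp hker)

lemma exists_isUnit_submatrix_of_rank_eq_card [Finite ι] [DecidableEq κ] (U : Matrix ι κ K)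
    (hU : U.rank = Fintype.card κ) : ∃ p : κ → ι, IsUnit (U.submatrix p id) := by
  obtain ⟨σ, a, ha, hspan, hli⟩ := exists_linearIndependent' K U.row
  have hspan_top : Submodule.span K (Set.range (U.row ∘ a)) = ⊤ := by
    refine hspan.trans (Submodule.eq_top_of_finrank_eq ?_)
    rw [← rank_eq_finrank_span_row, hU, Module.finrank_fintype_fun_eq_card]
  have : Finite σ := Finite.of_injective a ha
  have : Fintype σ := Fintype.ofFinite σ
  let b := Module.Basis.mk hli hspan_top.ge
  obtain ⟨e⟩ : Nonempty (κ ≃ σ) := by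
    refine Fintype.card_eq.mp ?_
    rw [← Module.finrank_eq_card_basis b, Module.finrank_fintype_fun_eq_card]
  exact ⟨a ∘ e, linearIndependent_rows_iff_isUnit.mp (hli.comp e e.injective)⟩

end FullColumnRank

section MaximalVolume

variable {K ι κ : Type*} [Fintype κ] [DecidableEq κ]

lemma vecMul_adjugate_apply [CommRing K] (A : Matrix κ κ K) (v : κ → K) (k : κ) :
    (v ᵥ* A.adjugate) k = (A.updateRow k v).det := by
  rw [← cramer_transpose_apply, cramer_eq_adjugate_mulVec, ← adjugate_transpose, mulVec_transpose]

lemma injective_of_isUnit_submatrix [CommRing K] [Nontrivial K] {U : Matrix ι κ K} {p : κ → ι}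
    (hp : IsUnit (U.submatrix p id)) : Function.Injective p := by
  intro i j hij
  by_contra hne
  refine ((isUnit_iff_isUnit_det _).mp hp).ne_zero (det_zero_of_row_eq hne ?_)
  ext l
  simp [hij]

lemma norm_mul_inv_submatrix_apply_le_one [NormedField K] {U : Matrix ι κ K} {p : κ → ι}
    (hp : IsUnit (U.submatrix p id))
    (hmax : ∀ q : κ → ι, ‖(U.submatrix q id).det‖ ≤ ‖(U.submatrix p id).det‖) (i : ι) (k : κ) :
    ‖(U * (U.submatrix p id)⁻¹) i k‖ ≤ 1 := by
  set A := U.submatrix p id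
  have hdet : 0 < ‖A.det‖ := norm_pos_iff.mpr ((isUnit_iff_isUnit_det _).mp hp).ne_zero
  have hrow : A.updateRow k (U i) = U.submatrix (Function.update p k i) id := by
    ext l j
    rcases eq_or_ne l k with rfl | hl <;> simp [A, updateRow_apply, *]
  have hentry : (U * A⁻¹) i k = (A.det)⁻¹ * (U.submatrix (Function.update p k i) id).det := by
    rw [inv_def, Ring.inverse_eq_inv', Matrix.mul_smul, Matrix.smul_apply, smul_eq_mul,
      mul_apply_eq_vecMul, vecMul_adjugate_apply, hrow]
  rw [hentry, norm_mul, norm_inv, inv_mul_le_one₀ hdet]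
  exact hmax _

lemma exists_isUnit_submatrix_forall_norm_det_le [NormedField K] [Fintype ι] (U : Matrix ι κ K)
    (hU : U.rank = Fintype.card κ) :
    ∃ p : κ → ι, IsUnit (U.submatrix p id) ∧
      ∀ q : κ → ι, ‖(U.submatrix q id).det‖ ≤ ‖(U.submatrix p id).det‖ := by
  obtain ⟨p₁, hp₁⟩ := exists_isUnit_submatrix_of_rank_eq_card U hU
  obtain ⟨p, -, hmax⟩ := Finset.univ.exists_max_image (fun q : κ → ι => ‖(U.submatrix q id).det‖)
    ⟨p₁, Finset.mem_univ _⟩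
  refine ⟨p, (isUnit_iff_isUnit_det _).mpr (isUnit_iff_ne_zero.mpr ?_), fun q => hmax q (by simp)⟩
  refine norm_pos_iff.mp ((norm_pos_iff.mpr ?_).trans_le (hmax p₁ (by simp)))
  exact ((isUnit_iff_isUnit_det _).mp hp₁).ne_zero

end MaximalVolume

lemma transpose_selection_mul {R ι κ α : Type*} [Semiring R] [Fintype ι] [DecidableEq ι]
    (p : κ → ι) (U : Matrix ι α R) :
    (of fun j i => if j = p i then (1 : R) else 0)ᵀ * U = U.submatrix p id := by
  ext k l
  simp [mul_apply]

section SmallestSingularValue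

variable {n m : ℕ} (U : Matrix (Fin n) (Fin m) ℂ)

lemma sigmaMin_mul_evNorm_le (x : Fin m → ℂ) : sigmaMin U * evNorm x ≤ evNorm (U *ᵥ x) := by
  rcases eq_or_ne x 0 with rfl | hx
  · simp
  have hx₀ := evNorm_pos hx
  have hunit : evNorm ((evNorm x : ℂ)⁻¹ • x) = 1 := by
    rw [evNorm_smul, norm_inv, Complex.norm_real, Real.norm_of_nonneg hx₀.le,
      inv_mul_cancel₀ hx₀.ne']
  have hle : sigmaMin U ≤ evNorm (U *ᵥ ((evNorm x : ℂ)⁻¹ • x)) :=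
    csInf_le ⟨0, by rintro r ⟨y, -, rfl⟩; exact evNorm_nonneg _⟩ ⟨_, hunit, rfl⟩
  rw [mulVec_smul, evNorm_smul, norm_inv, Complex.norm_real, Real.norm_of_nonneg hx₀.le] at hle
  rwa [← le_div_iff₀ hx₀, div_eq_inv_mul]

lemma le_sigmaMin [NeZero m] {c : ℝ} (h : ∀ x, c * evNorm x ≤ evNorm (U *ᵥ x)) :
    c ≤ sigmaMin U := by
  refine le_csInf ⟨_, Pi.single 0 1, ?_, rfl⟩ ?_
  · simp [evNorm, Pi.single_apply, apply_ite]
  · rintro r ⟨x, hx, rfl⟩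
    simpa [hx] using h x

lemma sigmaMin_pos [NeZero m] (hU : Function.Injective U.mulVec) : 0 < sigmaMin U := by
  obtain ⟨K, hK, hanti⟩ := (toEuclideanLin U).exists_antilipschitzWith
    (LinearMap.ker_eq_bot.mpr fun x y hxy =>
      WithLp.ofLp_injective 2 (hU (by simpa [toLpLin_apply] using congrArg WithLp.ofLp hxy)))
  refine lt_of_lt_of_le (by positivity) (le_sigmaMin U (c := (K : ℝ)⁻¹) fun x => ?_)
  have := ZeroHomClass.bound_of_antilipschitz (toEuclideanLin U) hanti (WithLp.toLp 2 x)
  rw [inv_mul_le_iff₀ (by positivity), evNorm_eq_norm_toLp, evNorm_eq_norm_toLp]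
  simpa [toLpLin_apply] using this

end SmallestSingularValue

lemma specNorm_inv_submatrix_le {n m : ℕ} {U : Matrix (Fin n) (Fin m) ℂ} {p : Fin m → Fin n}
    (hp : IsUnit (U.submatrix p id))
    (hmax : ∀ q : Fin m → Fin n, ‖(U.submatrix q id).det‖ ≤ ‖(U.submatrix p id).det‖)
    (hσ : 0 < sigmaMin U) :
    specNorm (U.submatrix p id)⁻¹ ≤ √((n : ℝ) * m) / sigmaMin U := by
  refine specNorm_le_of_forall_evNorm_mulVec_le _ (by positivity) fun y => ?_
  rw [div_mul_eq_mul_div, le_div_iff₀ hσ, mul_comm]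
  calc sigmaMin U * evNorm ((U.submatrix p id)⁻¹ *ᵥ y)
      ≤ evNorm (U *ᵥ ((U.submatrix p id)⁻¹ *ᵥ y)) := sigmaMin_mul_evNorm_le U _
    _ = evNorm ((U * (U.submatrix p id)⁻¹) *ᵥ y) := by rw [mulVec_mulVec]
    _ ≤ √((n : ℝ) * m) * evNorm y :=
      evNorm_mulVec_le_of_norm_apply_le_one _ (norm_mul_inv_submatrix_apply_le_one hp hmax) y

lemma nine_mul_mul_add_one_le_two_mul_four_pow (m : ℕ) :
    9 * (m : ℝ) * (m + 1) ≤ 2 * ((4 : ℝ) ^ m + 6 * m - 1) := by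
  induction m with
  | zero => norm_num
  | succ k ih =>
    have hk : (0 : ℝ) ≤ k * (k - 1) := by
      rcases k.eq_zero_or_pos with rfl | hpos
      · simp
      · exact mul_nonneg k.cast_nonneg (sub_nonneg.mpr (by exact_mod_cast hpos))
    push_cast
    rw [pow_succ]
    nlinarith

lemma sqrt_mul_le_qdeim_constant {n m : ℕ} (hmn : m < n) :
    √((n : ℝ) * m) ≤ √((n : ℝ) - m + 1) * (√((4 : ℝ) ^ m + 6 * m - 1) / 3) := by
  have hmn' : (m : ℝ) + 1 ≤ n := by exact_mod_cast hmn
  have hlin : 3 * (m : ℝ) + 1 ≤ 4 ^ m := by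
    have := one_add_mul_le_pow (by norm_num : (-2 : ℝ) ≤ 3) m
    norm_num at this
    linarith
  have hquad := nine_mul_mul_add_one_le_two_mul_four_pow m
  -- `(n - m + 1) a - 9 n m = (2 a - 9 m (m + 1)) + (n - m - 1) (a - 9 m)`, `a = 4 ^ m + 6 m - 1`
  have key : 9 * ((n : ℝ) * m) ≤ ((n : ℝ) - m + 1) * ((4 : ℝ) ^ m + 6 * m - 1) := by
    nlinarith [mul_nonneg (sub_nonneg.mpr hmn') (by linarith : (0 : ℝ) ≤ 4 ^ m - 3 * m - 1)]
  rw [← mul_div_assoc, ← Real.sqrt_mul (by linarith), le_div_iff₀ (by norm_num : (0 : ℝ) < 3)]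
  calc √((n : ℝ) * m) * 3 = √(3 ^ 2 * ((n : ℝ) * m)) := by
        rw [Real.sqrt_mul (by positivity : (0 : ℝ) ≤ 3 ^ 2), Real.sqrt_sq (by norm_num), mul_comm]
    _ ≤ _ := Real.sqrt_le_sqrt (by linarith)

/-- For a full-column-rank `U`, there is a selection operator `S` with
`‖(SᵀU)⁻¹‖₂ ≤ (√(n−m+1)/σ_min(U)) · √(4^m+6m−1)/3`. -/
theorem qdeim_selection_bound_full_rank {n m : ℕ} (hmn : m < n)
    (U : Matrix (Fin n) (Fin m) ℂ) (hU : U.rank = m) :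
    ∃ S : Matrix (Fin n) (Fin m) ℂ, IsSelection S ∧ IsUnit (Sᵀ * U) ∧
      specNorm (Sᵀ * U)⁻¹ ≤
        Real.sqrt ((n : ℝ) - m + 1) / sigmaMin U *
          (Real.sqrt ((4 : ℝ) ^ m + 6 * m - 1) / 3) := by
  replace hU : U.rank = Fintype.card (Fin m) := by rw [hU, Fintype.card_fin]
  obtain ⟨p, hp, hmax⟩ := exists_isUnit_submatrix_forall_norm_det_le U hU
  refine ⟨_, ⟨p, injective_of_isUnit_submatrix hp, rfl⟩, ?_⟩
  rw [transpose_selection_mul]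
  refine ⟨hp, ?_⟩
  rcases Nat.eq_zero_or_pos m with rfl | hm
  · have : specNorm (U.submatrix p id)⁻¹ ≤ 0 :=
      specNorm_le_of_forall_evNorm_mulVec_le _ le_rfl fun y => by simp [evNorm]
    simpa using this
  have : NeZero m := ⟨hm.ne'⟩
  have hσ := sigmaMin_pos U (mulVec_injective_of_rank_eq_card U hU)
  calc specNorm (U.submatrix p id)⁻¹ ≤ √((n : ℝ) * m) / sigmaMin U :=
        specNorm_inv_submatrix_le hp hmax hσ
    _ ≤ √((n : ℝ) - m + 1) * (√((4 : ℝ) ^ m + 6 * m - 1) / 3) / sigmaMin U := by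
        gcongr
        exact sqrt_mul_le_qdeim_constant hmn
    _ = _ := by ring
end

section
/- Let n, m be natural numbers with m < n and let U ∈ ℂ^{n×m} satisfy U*U = I_m. Then there exists a selection operator S⋆ such that S⋆ᵀU is invertible and for every f ∈ ℂⁿ, ‖f − U(S⋆ᵀU)⁻¹S⋆ᵀf‖₂ ≤ √(1 + m(n − m)) · ‖f − UU*f‖₂. -/
/-! Take the `m` rows `p` of `U` whose `m × m` minor `A = U.submatrix p id` has maximal modulus;
it is nonzero because expanding `det (Uᴴ * U) = 1` row by row writes it as a combination of such
minors. By Cramer's rule every entry of `V = U * A⁻¹` is a ratio of two such minors, hence has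
modulus at most `1`, and the rows `p` of `V` form the identity. The oblique projector `P = V * Sᵀ`
fixes the range of `U`, so `f - P f = g - P g` with `g = f - U Uᴴ f`. This vector vanishes on the
rows `p`, and on each of the other `n - m` rows it is bounded by `|g j| + ∑ k, |g (p k)|`;
Cauchy–Schwarz on both sums gives the factor `1 + m (n - m)`. -/

open Matrix

open Function Finset

def selectionMatrix (R : Type*) [Zero R] [One R] {ι κ : Type*} [DecidableEq ι] (p : κ → ι) :
    Matrix ι κ R :=
  of fun j i => if j = p i then 1 else 0

section Selection

variable {R : Type*} [Semiring R] {ι κ : Type*} [Fintype ι] [DecidableEq ι]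

theorem selectionMatrix_transpose_mulVec (p : κ → ι) (f : ι → R) :
    (selectionMatrix R p)ᵀ *ᵥ f = f ∘ p := by
  ext i
  simp [selectionMatrix, mulVec, dotProduct]

theorem selectionMatrix_transpose_mul {μ : Type*} (p : κ → ι) (U : Matrix ι μ R) :
    (selectionMatrix R p)ᵀ * U = U.submatrix p id := by
  ext i l
  simp [selectionMatrix, mul_apply]

end Selection

namespace Matrix

section Minors

variable {R : Type*} [CommRing R] {ι κ : Type*} [Fintype κ] [DecidableEq κ]

theorem det_mul_eq_sum_prod_mul_det_submatrix [Fintype ι] (L : Matrix κ ι R) (U : Matrix ι κ R) :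
    (L * U).det = ∑ p : κ → ι, (∏ k, L k (p k)) * (U.submatrix p id).det := by
  have hrows : (L * U).det =
      detRowAlternating.toMultilinearMap fun k => ∑ j, L k j • (U j : κ → R) := by
    congr 1
    ext k l
    simp [mul_apply, Finset.sum_apply]
  rw [hrows, MultilinearMap.map_sum]
  simp only [MultilinearMap.map_smul_univ, AlternatingMap.coe_multilinearMap, smul_eq_mul]
  rfl

theorem exists_det_submatrix_ne_zero_of_mul_eq_one [Nontrivial R] [Fintype ι]
    {L : Matrix κ ι R} {U : Matrix ι κ R} (h : L * U = 1) :
    ∃ p : κ → ι, (U.submatrix p id).det ≠ 0 := by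
  by_contra! hzero
  simpa [h, hzero] using det_mul_eq_sum_prod_mul_det_submatrix L U

theorem injective_of_det_submatrix_ne_zero {U : Matrix ι κ R} {p : κ → ι}
    (h : (U.submatrix p id).det ≠ 0) : Injective p := by
  intro a b hab
  by_contra hne
  exact h (det_zero_of_row_eq hne (by ext l; simp [hab]))

theorem det_updateRow_eq_vecMul_adjugate (A : Matrix κ κ R) (i : κ) (b : κ → R) :
    (A.updateRow i b).det = (b ᵥ* A.adjugate) i := by
  rw [← cramer_transpose_apply, cramer_eq_adjugate_mulVec, ← adjugate_transpose, mulVec_transpose]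

end Minors

section MaximalVolume

variable {K : Type*} [NormedField K] {ι κ : Type*} [Fintype κ] [DecidableEq κ]

theorem exists_det_submatrix_ne_zero_forall_norm_det_le [Fintype ι]
    {L : Matrix κ ι K} {U : Matrix ι κ K} (h : L * U = 1) :
    ∃ p : κ → ι, (U.submatrix p id).det ≠ 0 ∧
      ∀ q : κ → ι, ‖(U.submatrix q id).det‖ ≤ ‖(U.submatrix p id).det‖ := by
  obtain ⟨p₀, hp₀⟩ := exists_det_submatrix_ne_zero_of_mul_eq_one h
  have : Nonempty (κ → ι) := ⟨p₀⟩
  obtain ⟨p, hp⟩ := Finite.exists_max fun q : κ → ι => ‖(U.submatrix q id).det‖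
  exact ⟨p, norm_pos_iff.mp ((norm_pos_iff.mpr hp₀).trans_le (hp p₀)), hp⟩

theorem norm_mul_inv_submatrix_apply_le_one (U : Matrix ι κ K) {p : κ → ι}
    (hp : (U.submatrix p id).det ≠ 0)
    (hmax : ∀ q : κ → ι, ‖(U.submatrix q id).det‖ ≤ ‖(U.submatrix p id).det‖) (j : ι) (i : κ) :
    ‖(U * (U.submatrix p id)⁻¹) j i‖ ≤ 1 := by
  set A := U.submatrix p id
  have hswap : A.updateRow i (U j) = U.submatrix (update p i j) id := by
    ext k l
    by_cases hk : k = i <;> simp [A, updateRow_apply, hk]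
  have hentry : (U * A⁻¹) j i = (U.submatrix (update p i j) id).det / A.det := by
    rw [← hswap, det_updateRow_eq_vecMul_adjugate, inv_def, Ring.inverse_eq_inv',
      div_eq_inv_mul]
    simp [mul_apply, vecMul, dotProduct, Finset.mul_sum, mul_left_comm]
  rw [hentry, norm_div, div_le_one (norm_pos_iff.mpr hp)]
  exact hmax _

end MaximalVolume

end Matrix

theorem add_two_mul_add_mul_sq_le {a b c s M N : ℝ} (ha : 0 ≤ a) (hb : 0 ≤ b) (hM : 0 ≤ M)
    (hN : 0 ≤ N) (hca : c ^ 2 ≤ M * a) (hsb : s ^ 2 ≤ N * b) :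
    b + 2 * c * s + N * c ^ 2 ≤ (1 + M * N) * (a + b) := by
  have hcs : 2 * c * s ≤ a + M * N * b := by
    refine le_of_pow_le_pow_left₀ two_ne_zero (by positivity) ?_
    nlinarith [mul_le_mul hca hsb (sq_nonneg s) (by positivity), sq_nonneg (a - M * N * b)]
  nlinarith [mul_le_mul_of_nonneg_left hca hN]

section Interpolation

variable {K : Type*} [SeminormedRing K] {ι κ : Type*} [Fintype κ]

theorem norm_mulVec_apply_le_sum_norm {V : Matrix ι κ K} (hV : ∀ j i, ‖V j i‖ ≤ 1) (w : κ → K)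
    (j : ι) : ‖(V *ᵥ w) j‖ ≤ ∑ i, ‖w i‖ :=
  (norm_sum_le _ _).trans <| sum_le_sum fun i _ =>
    (norm_mul_le _ _).trans (mul_le_of_le_one_left (norm_nonneg _) (hV j i))

theorem sum_norm_sq_sub_mulVec_comp_le [Fintype ι] [DecidableEq ι] [DecidableEq κ]
    {V : Matrix ι κ K} {p : κ → ι} (hp : Injective p)
    (hV : ∀ j i, ‖V j i‖ ≤ 1) (hVp : V.submatrix p id = 1) (g : ι → K) :
    ∑ j, ‖g j - (V *ᵥ (g ∘ p)) j‖ ^ 2 ≤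
      (1 + Fintype.card κ * ((Fintype.card ι : ℝ) - Fintype.card κ)) * ∑ j, ‖g j‖ ^ 2 := by
  set w := g ∘ p
  set T := (univ.map ⟨p, hp⟩)ᶜ
  set c := ∑ i, ‖w i‖
  have hsplit (φ : ι → ℝ) : ∑ j, φ j = ∑ k, φ (p k) + ∑ j ∈ T, φ j := by
    rw [← sum_add_sum_compl (univ.map ⟨p, hp⟩), sum_map]
    rfl
  have hcard : (#T : ℝ) = Fintype.card ι - Fintype.card κ := by
    rw [card_compl, card_map, card_univ, Nat.cast_sub (Fintype.card_le_of_injective p hp)]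
  have hfix (k : κ) : (V *ᵥ w) (p k) = w k :=
    congrFun (show V.submatrix p id *ᵥ w = w by rw [hVp, one_mulVec]) k
  calc ∑ j, ‖g j - (V *ᵥ w) j‖ ^ 2 = ∑ j ∈ T, ‖g j - (V *ᵥ w) j‖ ^ 2 := by
        simp [hsplit (fun j => ‖g j - (V *ᵥ w) j‖ ^ 2), hfix, w]
    _ ≤ ∑ j ∈ T, (‖g j‖ + c) ^ 2 := sum_le_sum fun j _ => pow_le_pow_left₀ (norm_nonneg _)
          ((norm_sub_le _ _).trans (add_le_add le_rfl (norm_mulVec_apply_le_sum_norm hV w j))) 2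
    _ = ∑ j ∈ T, ‖g j‖ ^ 2 + 2 * c * ∑ j ∈ T, ‖g j‖ + #T * c ^ 2 := by
        simp only [add_sq, sum_add_distrib, ← sum_mul, ← mul_sum, sum_const, nsmul_eq_mul]
        ring
    _ ≤ (1 + Fintype.card κ * #T) * (∑ k, ‖w k‖ ^ 2 + ∑ j ∈ T, ‖g j‖ ^ 2) :=
        add_two_mul_add_mul_sq_le (sum_nonneg fun _ _ => by positivity)
          (sum_nonneg fun _ _ => by positivity) (Nat.cast_nonneg _) (Nat.cast_nonneg _)
          (by simpa using sq_sum_le_card_mul_sum_sq (s := univ) (f := fun k => ‖w k‖))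
          (sq_sum_le_card_mul_sum_sq (s := T) (f := fun j => ‖g j‖))
    _ = _ := by rw [hcard, hsplit fun j => ‖g j‖ ^ 2]; rfl

end Interpolation

theorem evNorm_sub_mulVec_comp_le {𝕜 : Type*} [RCLike 𝕜] {n m : ℕ} {V : Matrix (Fin n) (Fin m) 𝕜}
    {p : Fin m → Fin n} (hp : Injective p) (hV : ∀ j i, ‖V j i‖ ≤ 1) (hVp : V.submatrix p id = 1)
    (g : Fin n → 𝕜) :
    evNorm (g - V *ᵥ (g ∘ p)) ≤ Real.sqrt (1 + m * ((n : ℝ) - m)) * evNorm g := by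
  have hmn : (m : ℝ) ≤ n := by simpa using Fintype.card_le_of_injective p hp
  rw [evNorm, evNorm, ← Real.sqrt_mul (by nlinarith)]
  gcongr
  simpa using sum_norm_sq_sub_mulVec_comp_le hp hV hVp g

theorem exists_selection_projection_error_bound_general {n m : ℕ}
    (U : Matrix (Fin n) (Fin m) ℂ) (hU : Uᴴ * U = 1) :
    ∃ Sstar : Matrix (Fin n) (Fin m) ℂ, IsSelection Sstar ∧ IsUnit (Sstarᵀ * U) ∧
      ∀ f : Fin n → ℂ,
        evNorm (f - (U * (Sstarᵀ * U)⁻¹ * Sstarᵀ).mulVec f) ≤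
          Real.sqrt (1 + m * ((n : ℝ) - m)) * evNorm (f - (U * Uᴴ).mulVec f) := by
  obtain ⟨p, hdet, hmax⟩ := exists_det_submatrix_ne_zero_forall_norm_det_le hU
  have hp := injective_of_det_submatrix_ne_zero hdet
  set A := U.submatrix p id
  have hA : IsUnit A.det := hdet.isUnit
  have hSU : (selectionMatrix ℂ p)ᵀ * U = A := selectionMatrix_transpose_mul p U
  refine ⟨selectionMatrix ℂ p, ⟨p, hp, rfl⟩, hSU ▸ (isUnit_iff_isUnit_det A).mpr hA, fun f => ?_⟩
  rw [hSU]
  have hPU : U * A⁻¹ * (selectionMatrix ℂ p)ᵀ * U = U := by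
    rw [Matrix.mul_assoc (U * A⁻¹), hSU, Matrix.mul_assoc, nonsing_inv_mul A hA, Matrix.mul_one]
  set g := f - (U * Uᴴ) *ᵥ f
  have hreduce : f - (U * A⁻¹ * (selectionMatrix ℂ p)ᵀ) *ᵥ f = g - (U * A⁻¹) *ᵥ (g ∘ p) := by
    rw [← selectionMatrix_transpose_mulVec, mulVec_mulVec]
    simp only [g, mulVec_sub, mulVec_mulVec, ← Matrix.mul_assoc, hPU]
    abel
  have hVp : (U * A⁻¹).submatrix p id = 1 := by
    rw [← selectionMatrix_transpose_mul (R := ℂ), ← Matrix.mul_assoc, hSU, mul_nonsing_inv A hA]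
  rw [hreduce]
  exact evNorm_sub_mulVec_comp_le hp (norm_mul_inv_submatrix_apply_le_one U hdet hmax) hVp g

/-- There is a selection operator `S⋆` such that for every `f`,
`‖f − U(S⋆ᵀU)⁻¹S⋆ᵀf‖₂ ≤ √(1+m(n−m)) · ‖f − UU*f‖₂`. -/
theorem exists_selection_projection_error_bound {n m : ℕ} (hmn : m < n)
    (U : Matrix (Fin n) (Fin m) ℂ) (hU : Uᴴ * U = 1) :
    ∃ Sstar : Matrix (Fin n) (Fin m) ℂ, IsSelection Sstar ∧ IsUnit (Sstarᵀ * U) ∧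
      ∀ f : Fin n → ℂ,
        evNorm (f - (U * (Sstarᵀ * U)⁻¹ * Sstarᵀ).mulVec f) ≤
          Real.sqrt (1 + m * ((n : ℝ) - m)) * evNorm (f - (U * Uᴴ).mulVec f) :=
  exists_selection_projection_error_bound_general U hU
end

section
/- Let R ∈ ℂ^{m×n} (m ≤ n) be upper trapezoidal with leading m×m block T = R(1:m, 1:m) having nonzero diagonal entries, satisfying the dominance property |R_{ii}|² ≥ Σ_{l=i}^{min(k,m)} |R_{lk}|² for all 1 ≤ i ≤ m and i ≤ k ≤ n, and let D = diag(T_{11}, …, T_{mm}) and T̆ = D⁻¹T. Then σ_min(T) ≥ σ_min(R) / (√(n − m + 1) · ‖T̆⁻¹‖₂), where σ_min(T) = 1/‖T⁻¹‖₂ and σ_min(R) = min over unit vectors x ∈ ℂᵐ of ‖x*R‖₂. -/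
/-!
Let `δ = |T_{mm}|`. Dominance with `k = m` shows that `δ` is the smallest pivot, so
`‖D⁻¹‖₂ ≤ 1/δ` and `‖T⁻¹‖₂ = ‖T̆⁻¹ D⁻¹‖₂ ≤ ‖T̆⁻¹‖₂ / δ`. Dominance with `i = m` bounds every
entry of the last row of `R` by `δ`; that row has at most `n - m + 1` nonzero entries, so testing
`σ_min(R)` against the last unit vector gives `σ_min(R) ≤ √(n - m + 1) · δ`.
-/

open Matrix

/-- Smallest singular value of `R ∈ ℂ^{m×n}` (`m ≤ n`): the infimum (minimum)
of `‖x*R‖₂` over unit vectors `x ∈ ℂᵐ`. -/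
noncomputable def sigmaMinRow {m n : ℕ} (R : Matrix (Fin m) (Fin n) ℂ) : ℝ :=
  sInf {r : ℝ | ∃ x : Fin m → ℂ, evNorm x = 1 ∧ r = evNorm (Matrix.vecMul (star x) R)}

open scoped Matrix.Norms.L2Operator

section L2OpNorm

variable {𝕜 ι : Type*} [RCLike 𝕜] [Fintype ι] [DecidableEq ι]

lemma specNorm_eq_l2_opNorm {a b : ℕ} (A : Matrix (Fin a) (Fin b) 𝕜) : specNorm A = ‖A‖ := rfl

lemma l2_opNorm_inv_diagonal_le {d : ι → 𝕜} {δ : ℝ} (hδ : 0 < δ) (hd : ∀ i, δ ≤ ‖d i‖) :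
    ‖(diagonal d)⁻¹‖ ≤ δ⁻¹ := by
  have hd₀ : ∀ i, d i ≠ 0 := fun i => norm_pos_iff.mp (hδ.trans_le (hd i))
  have hinv : (diagonal d)⁻¹ = diagonal d⁻¹ := inv_eq_right_inv <| by
    rw [diagonal_mul_diagonal, ← diagonal_one]
    exact congrArg diagonal (funext fun i => mul_inv_cancel₀ (hd₀ i))
  rw [hinv, l2_opNorm_diagonal, pi_norm_le_iff_of_nonneg (inv_nonneg.mpr hδ.le)]
  intro i
  simpa only [Pi.inv_apply, norm_inv] using inv_anti₀ hδ (hd i)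

lemma l2_opNorm_inv_le_of_diagonal (T : Matrix ι ι 𝕜) {d : ι → 𝕜} {δ : ℝ} (hδ : 0 < δ)
    (hd : ∀ i, δ ≤ ‖d i‖) : ‖T⁻¹‖ ≤ ‖((diagonal d)⁻¹ * T)⁻¹‖ * δ⁻¹ := by
  have hD : IsUnit (diagonal d).det := by
    rw [det_diagonal, isUnit_iff_ne_zero, Finset.prod_ne_zero_iff]
    exact fun i _ => norm_pos_iff.mp (hδ.trans_le (hd i))
  calc ‖T⁻¹‖ = ‖((diagonal d)⁻¹ * T)⁻¹ * (diagonal d)⁻¹‖ := by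
        rw [Matrix.mul_inv_rev, nonsing_inv_nonsing_inv _ hD, mul_assoc, mul_nonsing_inv _ hD,
          mul_one]
    _ ≤ ‖((diagonal d)⁻¹ * T)⁻¹‖ * ‖(diagonal d)⁻¹‖ := l2_opNorm_mul _ _
    _ ≤ ‖((diagonal d)⁻¹ * T)⁻¹‖ * δ⁻¹ := by
        gcongr
        exact l2_opNorm_inv_diagonal_le hδ hd

lemma l2_opNorm_inv_pos_of_isUpperTriangular [LinearOrder ι] [Nonempty ι] {T : Matrix ι ι 𝕜}
    (hT : T.IsUpperTriangular) (hdiag : ∀ i, T i i ≠ 0) : 0 < ‖T⁻¹‖ := by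
  have hdet : IsUnit T.det := by
    rw [det_of_isUpperTriangular hT, isUnit_iff_ne_zero, Finset.prod_ne_zero_iff]
    exact fun i _ => hdiag i
  exact norm_pos_iff.mpr fun h => by simpa [h] using (isUnit_nonsing_inv_det T hdet).ne_zero

end L2OpNorm

lemma evNorm_le_sqrt_mul_of_eq_zero_of_lt {𝕜 : Type*} [RCLike 𝕜] {n : ℕ} (v : Fin n → 𝕜)
    (j : Fin n) {c : ℝ} (hc : 0 ≤ c) (hzero : ∀ k < j, v k = 0) (hle : ∀ k, j ≤ k → ‖v k‖ ≤ c) :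
    evNorm v ≤ √((n - j : ℕ) : ℝ) * c := by
  have hsum : ∑ k, ‖v k‖ ^ 2 ≤ (n - j : ℕ) * c ^ 2 :=
    calc ∑ k, ‖v k‖ ^ 2 = ∑ k ∈ Finset.Ici j, ‖v k‖ ^ 2 := by
          refine (Finset.sum_subset (Finset.subset_univ _) fun k _ hk => ?_).symm
          rw [hzero k (by simpa using hk), norm_zero, zero_pow two_ne_zero]
      _ ≤ (Finset.Ici j).card • c ^ 2 :=
          Finset.sum_le_card_nsmul _ _ _ fun k hk => by
            gcongr
            exact hle k (Finset.mem_Ici.mp hk)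
      _ = (n - j : ℕ) * c ^ 2 := by rw [Fin.card_Ici, nsmul_eq_mul]
  rw [evNorm, ← Real.sqrt_sq hc, ← Real.sqrt_mul (Nat.cast_nonneg _)]
  exact Real.sqrt_le_sqrt hsum

lemma sigmaMinRow_le_evNorm_row {m n : ℕ} (R : Matrix (Fin m) (Fin n) ℂ) (i : Fin m) :
    sigmaMinRow R ≤ evNorm (R i) := by
  refine csInf_le ⟨0, ?_⟩ ⟨Pi.single i 1, ?_, ?_⟩
  · rintro r ⟨x, -, rfl⟩
    exact Real.sqrt_nonneg _
  · simp [evNorm, Pi.single_apply, apply_ite]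
  · rw [Pi.star_single, star_one, single_one_vecMul]
    rfl

lemma norm_le_norm_pivot_of_dominance {m n : ℕ} (hmn : m ≤ n) {R : Matrix (Fin m) (Fin n) ℂ}
    (hdom : ∀ (i : Fin m) (k : Fin n), (i : ℕ) ≤ (k : ℕ) →
      ∑ l ∈ Finset.univ.filter fun l : Fin m => (i : ℕ) ≤ (l : ℕ) ∧ (l : ℕ) ≤ (k : ℕ),
          ‖R l k‖ ^ 2 ≤ ‖R i (Fin.castLE hmn i)‖ ^ 2)
    {i l : Fin m} {k : Fin n} (hil : i ≤ l) (hlk : (l : ℕ) ≤ k) :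
    ‖R l k‖ ≤ ‖R i (Fin.castLE hmn i)‖ := by
  rw [← pow_le_pow_iff_left₀ (norm_nonneg _) (norm_nonneg _) two_ne_zero]
  refine le_trans ?_ (hdom i k (le_trans hil hlk))
  exact Finset.single_le_sum (f := fun l => ‖R l k‖ ^ 2) (fun _ _ => by positivity)
    (by simpa using ⟨hil, hlk⟩)

lemma sigmaMinRow_le_sqrt_mul_norm_last_pivot {k n : ℕ} (hmn : k + 1 ≤ n)
    {R : Matrix (Fin (k + 1)) (Fin n) ℂ}
    (htrap : ∀ (l : Fin (k + 1)) (j : Fin n), (j : ℕ) < (l : ℕ) → R l j = 0)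
    (hdom : ∀ (i : Fin (k + 1)) (j : Fin n), (i : ℕ) ≤ (j : ℕ) →
      ∑ l ∈ Finset.univ.filter fun l : Fin (k + 1) => (i : ℕ) ≤ (l : ℕ) ∧ (l : ℕ) ≤ (j : ℕ),
          ‖R l j‖ ^ 2 ≤ ‖R i (Fin.castLE hmn i)‖ ^ 2) :
    sigmaMinRow R ≤ √((n - k : ℕ) : ℝ) * ‖R (Fin.last k) (Fin.castLE hmn (Fin.last k))‖ :=
  (sigmaMinRow_le_evNorm_row R (Fin.last k)).trans <|
    evNorm_le_sqrt_mul_of_eq_zero_of_lt (R (Fin.last k)) (Fin.castLE hmn (Fin.last k))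
      (norm_nonneg _) (fun j hj => htrap _ j hj)
      fun _ hj => norm_le_norm_pivot_of_dominance hmn hdom le_rfl hj

/-- For upper trapezoidal `R` with the pivoting dominance property, the leading
block `T` satisfies `σ_min(T) ≥ σ_min(R)/(√(n−m+1)·‖T̆⁻¹‖₂)` where `T̆ = D⁻¹T`
and `σ_min(T) = 1/‖T⁻¹‖₂`. -/
theorem trapezoidal_leading_block_sigma_min_bound {m n : ℕ} (hmn : m ≤ n)
    (R : Matrix (Fin m) (Fin n) ℂ)
    (htrap : ∀ (l : Fin m) (k : Fin n), (k : ℕ) < (l : ℕ) → R l k = 0)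
    (T : Matrix (Fin m) (Fin m) ℂ) (hT : T = Matrix.of fun i j => R i (Fin.castLE hmn j))
    (hdiag : ∀ i : Fin m, T i i ≠ 0)
    (hdom : ∀ (i : Fin m) (k : Fin n), (i : ℕ) ≤ (k : ℕ) →
      ∑ l ∈ Finset.univ.filter fun l : Fin m => (i : ℕ) ≤ (l : ℕ) ∧ (l : ℕ) ≤ (k : ℕ),
          ‖R l k‖ ^ 2 ≤ ‖R i (Fin.castLE hmn i)‖ ^ 2)
    (D : Matrix (Fin m) (Fin m) ℂ) (hD : D = Matrix.diagonal fun i => T i i) :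
    sigmaMinRow R / (Real.sqrt ((n : ℝ) - m + 1) * specNorm ((D⁻¹ * T)⁻¹)) ≤
      1 / specNorm T⁻¹ := by
  subst hD
  have hTR : ∀ i j, T i j = R i (Fin.castLE hmn j) := by simp [hT]
  obtain _ | k := m
  · simp [specNorm_eq_l2_opNorm, Subsingleton.elim _ (0 : Matrix (Fin 0) (Fin 0) ℂ)]
  set δ := ‖T (Fin.last k) (Fin.last k)‖
  have hδ : 0 < δ := norm_pos_iff.mpr (hdiag _)
  have hpivot : ∀ i, δ ≤ ‖T i i‖ := fun i => by
    simpa only [δ, hTR] using norm_le_norm_pivot_of_dominance hmn hdom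
      (k := Fin.castLE hmn (Fin.last k)) (Fin.le_last i) le_rfl
  have hrow : sigmaMinRow R ≤ √((n : ℝ) - (k + 1 : ℕ) + 1) * δ := by
    have hcast : ((n - k : ℕ) : ℝ) = (n : ℝ) - (k + 1 : ℕ) + 1 := by
      rw [Nat.cast_sub (by omega)]
      push_cast
      ring
    simpa only [δ, hTR, hcast] using sigmaMinRow_le_sqrt_mul_norm_last_pivot hmn htrap hdom
  have hinv := l2_opNorm_inv_le_of_diagonal T hδ hpivot
  have hTinv : 0 < ‖T⁻¹‖ :=
    l2_opNorm_inv_pos_of_isUpperTriangular (fun i j hji => (hTR i j).trans (htrap _ _ hji)) hdiag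
  rw [specNorm_eq_l2_opNorm, specNorm_eq_l2_opNorm]
  refine div_le_of_le_mul₀ (mul_nonneg (Real.sqrt_nonneg _) (norm_nonneg _))
    (one_div_nonneg.mpr hTinv.le) ?_
  calc sigmaMinRow R ≤ √((n : ℝ) - (k + 1 : ℕ) + 1) * δ := hrow
    _ ≤ √((n : ℝ) - (k + 1 : ℕ) + 1) * (‖((diagonal fun i => T i i)⁻¹ * T)⁻¹‖ / ‖T⁻¹‖) := by
        gcongr
        rw [le_div_iff₀ hTinv]
        rwa [le_mul_inv_iff₀ hδ, mul_comm] at hinv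
    _ = 1 / ‖T⁻¹‖ * (√((n : ℝ) - (k + 1 : ℕ) + 1) * ‖((diagonal fun i => T i i)⁻¹ * T)⁻¹‖) := by
        ring
end

section
/- Let R ∈ ℂ^{m×n} (m ≤ n) be upper trapezoidal with RR* = I_m, satisfying the pivoting dominance property |R_{ii}|² ≥ Σ_{l=i}^{min(k,m)} |R_{lk}|² for all 1 ≤ i ≤ m and i ≤ k ≤ n. Then the leading m×m block T = R(1:m, 1:m) is invertible and ‖T⁻¹‖₂ ≤ √(n − m + 1) · √(4^m + 6m − 1)/3. -/
/-!
Pivoting dominance makes `T` upper triangular with `‖T i l‖ ≤ ‖T i i‖` for `i ≤ l` and with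
non-increasing pivots `‖T i i‖`. The last row of `R` is a unit vector with at most `n - m + 1`
nonzero entries, each bounded by the last pivot, so `1 ≤ (n - m + 1) ‖T i i‖²` for every `i`.
Back substitution in `T T⁻¹ = 1` gives `‖T⁻¹ i j‖ ≤ ∑_{i < l ≤ j} ‖T⁻¹ l j‖`, so the partial
column sums at most double with each row and `‖T⁻¹ i j‖ ‖T j j‖ ≤ 2 ^ (j - i - 1)`. Summing the
squares, the Frobenius norm of `T⁻¹`, which dominates its spectral norm, is at most
`(n - m + 1) (4 ^ m + 6 m - 1) / 9`.
-/

open Matrix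

open Finset

theorem Fin.Icc_mk_add_one_eq_Ioc {m : ℕ} {i j : Fin m} (hij : i < j) :
    Icc ⟨i + 1, by omega⟩ j = Ioc i j := by
  ext l
  simp only [mem_Ioc, mem_Icc, Fin.lt_def, Fin.le_def]
  omega

theorem Fin.sum_Icc_le_two_pow {m : ℕ} {a : Fin m → ℝ} {j : Fin m} (hj : a j ≤ 1)
    (h : ∀ i < j, a i ≤ ∑ l ∈ Ioc i j, a l) (i : Fin m) (hij : i ≤ j) :
    ∑ l ∈ Icc i j, a l ≤ 2 ^ (j - i : ℕ) := by
  obtain ⟨d, hd⟩ : ∃ d, (j : ℕ) - i = d := ⟨_, rfl⟩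
  rw [hd]
  induction d generalizing i with
  | zero =>
    obtain rfl : i = j := le_antisymm hij (by rw [Fin.le_def]; omega)
    simpa using hj
  | succ d ih =>
    have hlt : i < j := by rw [Fin.lt_def]; omega
    have hrest := ih ⟨i + 1, by omega⟩ (by simp only [Fin.le_def]; omega) (by simp only; omega)
    rw [Fin.Icc_mk_add_one_eq_Ioc hlt] at hrest
    rw [Icc_eq_cons_Ioc hij, Finset.sum_cons, pow_succ]
    linarith [h i hlt]

theorem Fin.le_two_pow_of_le_sum_Ioc {m : ℕ} {a : Fin m → ℝ} {j : Fin m} (hj : a j ≤ 1)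
    (h : ∀ i < j, a i ≤ ∑ l ∈ Ioc i j, a l) (i : Fin m) (hij : i ≤ j) :
    a i ≤ 2 ^ (j - i - 1 : ℕ) := by
  rcases hij.lt_or_eq with hlt | rfl
  · refine (h i hlt).trans ?_
    rw [← Fin.Icc_mk_add_one_eq_Ioc hlt, Nat.sub_sub]
    exact Fin.sum_Icc_le_two_pow hj h _ (by simp only [Fin.le_def]; omega)
  · simpa using hj

theorem sum_range_four_pow_sub_one (J : ℕ) :
    ∑ i ∈ range (J + 1), (4 : ℝ) ^ (J - i - 1) = (4 ^ J + 2) / 3 := by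
  induction J with
  | zero => norm_num
  | succ J ih =>
    rw [sum_range_succ']
    simp only [Nat.add_sub_add_right, ih, Nat.sub_zero, Nat.add_sub_cancel]
    ring

theorem sum_range_four_pow_add_two_div_three (m : ℕ) :
    ∑ j ∈ range m, ((4 : ℝ) ^ j + 2) / 3 = (4 ^ m + 6 * m - 1) / 9 := by
  induction m with
  | zero => norm_num
  | succ m ih => rw [sum_range_succ, ih]; push_cast; ring

theorem Fin.sum_Iic_four_pow_sub_one {m : ℕ} (j : Fin m) :
    ∑ i ∈ Iic j, (4 : ℝ) ^ (j - i - 1 : ℕ) = (4 ^ (j : ℕ) + 2) / 3 := by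
  rw [← sum_range_four_pow_sub_one, Nat.range_succ_eq_Iic, ← Fin.map_valEmbedding_Iic, sum_map]
  rfl

namespace Matrix

variable {n : Type*} [Fintype n] [LinearOrder n]

theorem IsUpperTriangular.mul_apply_eq_sum_Icc [LocallyFiniteOrder n] {R : Type*}
    [NonUnitalNonAssocSemiring R] {A B : Matrix n n R}
    (hA : A.IsUpperTriangular) (hB : B.IsUpperTriangular) (i j : n) :
    (A * B) i j = ∑ l ∈ Icc i j, A i l * B l j := by
  rw [mul_apply, ← sum_subset (subset_univ _)]
  intro l _ hl
  rcases lt_or_ge l i with hli | hil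
  · rw [hA hli, zero_mul]
  · rw [hB (lt_of_not_ge fun hlj => hl (mem_Icc.2 ⟨hil, hlj⟩)), mul_zero]

variable {K : Type*} [Field K] {T : Matrix n n K}

theorem IsUpperTriangular.inv (hT : T.IsUpperTriangular) : T⁻¹.IsUpperTriangular := by
  by_cases h : IsUnit T.det
  · have := T.invertibleOfIsUnitDet h
    exact blockTriangular_inv_of_blockTriangular hT
  · rw [nonsing_inv_apply_not_isUnit T h]
    exact fun _ _ _ => rfl

theorem IsUpperTriangular.isUnit_of_diag_ne_zero (hT : T.IsUpperTriangular)
    (hdiag : ∀ i, T i i ≠ 0) : IsUnit T := by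
  rw [isUnit_iff_isUnit_det, det_of_isUpperTriangular hT, isUnit_iff_ne_zero]
  exact prod_ne_zero_iff.2 fun i _ => hdiag i

variable [LocallyFiniteOrder n]

theorem IsUpperTriangular.inv_apply_self_mul (hT : T.IsUpperTriangular) (hunit : IsUnit T)
    (j : n) : T⁻¹ j j * T j j = 1 := by
  have h := hT.mul_apply_eq_sum_Icc hT.inv j j
  rw [mul_nonsing_inv T ((isUnit_iff_isUnit_det T).1 hunit), Icc_self, sum_singleton,
    one_apply_eq] at h
  rw [mul_comm, h]

theorem IsUpperTriangular.mul_inv_apply_of_lt (hT : T.IsUpperTriangular) (hunit : IsUnit T)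
    {i j : n} (hij : i < j) : T i i * T⁻¹ i j = -∑ l ∈ Ioc i j, T i l * T⁻¹ l j := by
  have h := hT.mul_apply_eq_sum_Icc hT.inv i j
  rw [mul_nonsing_inv T ((isUnit_iff_isUnit_det T).1 hunit), one_apply_ne hij.ne,
    Icc_eq_cons_Ioc hij.le, sum_cons] at h
  exact eq_neg_of_add_eq_zero_left h.symm


section Normed

variable {K : Type*} [NormedField K]

theorem IsUpperTriangular.norm_inv_apply_le_sum_Ioc {T : Matrix n n K}
    (hT : T.IsUpperTriangular) (hdom : ∀ i l, i ≤ l → ‖T i l‖ ≤ ‖T i i‖)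
    (hdiag : ∀ i, T i i ≠ 0) {i j : n} (hij : i < j) :
    ‖T⁻¹ i j‖ ≤ ∑ l ∈ Ioc i j, ‖T⁻¹ l j‖ := by
  have hpos : 0 < ‖T i i‖ := norm_pos_iff.2 (hdiag i)
  refine le_of_mul_le_mul_left ?_ hpos
  calc ‖T i i‖ * ‖T⁻¹ i j‖
      = ‖∑ l ∈ Ioc i j, T i l * T⁻¹ l j‖ := by
        rw [← norm_mul, hT.mul_inv_apply_of_lt (hT.isUnit_of_diag_ne_zero hdiag) hij, norm_neg]
    _ ≤ ∑ l ∈ Ioc i j, ‖T i l‖ * ‖T⁻¹ l j‖ := norm_sum_le_of_le _ fun l _ => (norm_mul _ _).le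
    _ ≤ ∑ l ∈ Ioc i j, ‖T i i‖ * ‖T⁻¹ l j‖ := by
        gcongr with l hl
        exact hdom i l (mem_Ioc.1 hl).1.le
    _ = ‖T i i‖ * ∑ l ∈ Ioc i j, ‖T⁻¹ l j‖ := (mul_sum _ _ _).symm

variable {m : ℕ} {T : Matrix (Fin m) (Fin m) K}

/-- At `i = j` the truncated exponent `j - i - 1` is `0`. -/
theorem IsUpperTriangular.norm_inv_apply_mul_le_two_pow (hT : T.IsUpperTriangular)
    (hdom : ∀ i l, i ≤ l → ‖T i l‖ ≤ ‖T i i‖) (hdiag : ∀ i, T i i ≠ 0) {i j : Fin m}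
    (hij : i ≤ j) : ‖T⁻¹ i j‖ * ‖T j j‖ ≤ 2 ^ (j - i - 1 : ℕ) := by
  refine Fin.le_two_pow_of_le_sum_Ioc (a := fun l => ‖T⁻¹ l j‖ * ‖T j j‖) ?_ (fun i hi => ?_) i hij
  · rw [← norm_mul, hT.inv_apply_self_mul (hT.isUnit_of_diag_ne_zero hdiag), norm_one]
  · rw [← sum_mul]
    exact mul_le_mul_of_nonneg_right (hT.norm_inv_apply_le_sum_Ioc hdom hdiag hi) (norm_nonneg _)

theorem IsUpperTriangular.sum_norm_inv_apply_sq_mul_le (hT : T.IsUpperTriangular)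
    (hdom : ∀ i l, i ≤ l → ‖T i l‖ ≤ ‖T i i‖) (hdiag : ∀ i, T i i ≠ 0) (j : Fin m) :
    (∑ i, ‖T⁻¹ i j‖ ^ 2) * ‖T j j‖ ^ 2 ≤ (4 ^ (j : ℕ) + 2) / 3 := by
  rw [← Fin.sum_Iic_four_pow_sub_one, sum_mul,
    ← sum_subset (subset_univ (Iic j)) fun i _ hi => by
      rw [hT.inv (lt_of_not_ge (mt mem_Iic.2 hi)), norm_zero, zero_pow two_ne_zero, zero_mul]]
  gcongr with i hi
  calc ‖T⁻¹ i j‖ ^ 2 * ‖T j j‖ ^ 2 = (‖T⁻¹ i j‖ * ‖T j j‖) ^ 2 := (mul_pow _ _ _).symm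
    _ ≤ (2 ^ (j - i - 1 : ℕ)) ^ 2 :=
      pow_le_pow_left₀ (by positivity) (hT.norm_inv_apply_mul_le_two_pow hdom hdiag
        (mem_Iic.1 hi)) 2
    _ = 4 ^ (j - i - 1 : ℕ) := by rw [← pow_mul, mul_comm, pow_mul]; norm_num

theorem IsUpperTriangular.sum_sum_norm_inv_apply_sq_le (hT : T.IsUpperTriangular)
    (hdom : ∀ i l, i ≤ l → ‖T i l‖ ≤ ‖T i i‖) {c : ℝ} (hc : ∀ j, 1 ≤ c * ‖T j j‖ ^ 2) :
    ∑ i, ∑ j, ‖T⁻¹ i j‖ ^ 2 ≤ c * ((4 ^ m + 6 * m - 1) / 9) := by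
  have hdiag : ∀ j, T j j ≠ 0 := fun j hj => absurd (hc j) (by simp [hj])
  rw [sum_comm, ← sum_range_four_pow_add_two_div_three, ← Fin.sum_univ_eq_sum_range, mul_sum]
  gcongr with j
  have hpos : 0 < ‖T j j‖ ^ 2 := pow_pos (norm_pos_iff.2 (hdiag j)) 2
  calc ∑ i, ‖T⁻¹ i j‖ ^ 2 ≤ (4 ^ (j : ℕ) + 2) / 3 * (1 / ‖T j j‖ ^ 2) := by
        rw [mul_one_div, le_div_iff₀ hpos]
        exact hT.sum_norm_inv_apply_sq_mul_le hdom hdiag j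
    _ ≤ (4 ^ (j : ℕ) + 2) / 3 * c := by
        gcongr
        rw [div_le_iff₀ hpos]
        exact hc j
    _ = c * ((4 ^ (j : ℕ) + 2) / 3) := mul_comm _ _

end Normed

end Matrix

theorem specNorm_le_sqrt_sum_norm_sq {𝕜 : Type*} [RCLike 𝕜] {a b : ℕ}
    (A : Matrix (Fin a) (Fin b) 𝕜) : specNorm A ≤ √(∑ i, ∑ j, ‖A i j‖ ^ 2) := by
  refine ContinuousLinearMap.opNorm_le_bound _ (Real.sqrt_nonneg _) fun x => ?_
  rw [EuclideanSpace.norm_eq, EuclideanSpace.norm_eq, ← Real.sqrt_mul (by positivity)]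
  refine Real.sqrt_le_sqrt ?_
  rw [sum_mul]
  refine sum_le_sum fun i _ => ?_
  calc ‖∑ j, A i j * x j‖ ^ 2 ≤ (∑ j, ‖A i j‖ * ‖x j‖) ^ 2 := by
        gcongr
        exact norm_sum_le_of_le _ fun j _ => (norm_mul _ _).le
    _ ≤ (∑ j, ‖A i j‖ ^ 2) * ∑ j, ‖x j‖ ^ 2 := sum_mul_sq_le_sq_mul_sq _ _ _

theorem Matrix.sum_norm_sq_eq_one_of_mul_conjTranspose_eq_one {𝕜 ι κ : Type*} [RCLike 𝕜]
    [Fintype κ] [DecidableEq ι] {R : Matrix ι κ 𝕜} (h : R * Rᴴ = 1) (i : ι) :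
    ∑ k, ‖R i k‖ ^ 2 = 1 := by
  have hii := congrFun (congrFun h i) i
  simp only [mul_apply, one_apply_eq, conjTranspose_apply, RCLike.star_def, RCLike.mul_conj]
    at hii
  exact_mod_cast hii

theorem one_le_mul_sq_of_sum_norm_sq_eq_one {E : Type*} [SeminormedAddCommGroup E] {n : ℕ}
    {v : Fin n → E} (hv : ∑ k, ‖v k‖ ^ 2 = 1) {i : Fin n} (hzero : ∀ k < i, v k = 0) {c : ℝ}
    (hc : ∀ k, i ≤ k → ‖v k‖ ≤ c) : 1 ≤ ((n - i : ℕ) : ℝ) * c ^ 2 := by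
  calc 1 = ∑ k ∈ Ici i, ‖v k‖ ^ 2 := by
        rw [← hv]
        refine (sum_subset (subset_univ _) fun k _ hk => ?_).symm
        rw [hzero k (lt_of_not_ge (mt mem_Ici.2 hk)), norm_zero, zero_pow two_ne_zero]
    _ ≤ ∑ k ∈ Ici i, c ^ 2 := by
        gcongr with k hk
        exact hc k (mem_Ici.1 hk)
    _ = ((n - i : ℕ) : ℝ) * c ^ 2 := by rw [sum_const, Fin.card_Ici, nsmul_eq_mul]

section Trapezoidal

variable {𝕜 : Type*} [RCLike 𝕜] {m n : ℕ} (hmn : m ≤ n)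

def HasPivotingDominance (R : Matrix (Fin m) (Fin n) 𝕜) : Prop :=
  ∀ (i : Fin m) (k : Fin n), (i : ℕ) ≤ (k : ℕ) →
    ∑ l ∈ univ.filter fun l : Fin m => (i : ℕ) ≤ (l : ℕ) ∧ (l : ℕ) ≤ (k : ℕ),
      ‖R l k‖ ^ 2 ≤ ‖R i (Fin.castLE hmn i)‖ ^ 2

variable {hmn} {R : Matrix (Fin m) (Fin n) 𝕜}

theorem HasPivotingDominance.norm_le (hdom : HasPivotingDominance hmn R) {i l : Fin m}
    {k : Fin n} (hil : i ≤ l) (hlk : (l : ℕ) ≤ k) : ‖R l k‖ ≤ ‖R i (Fin.castLE hmn i)‖ := by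
  rw [← pow_le_pow_iff_left₀ (norm_nonneg _) (norm_nonneg _) two_ne_zero]
  refine (single_le_sum (f := fun l => ‖R l k‖ ^ 2) (fun _ _ => by positivity) ?_).trans
    (hdom i k (Nat.le_trans hil hlk))
  simp only [mem_filter, mem_univ, true_and]
  exact ⟨hil, hlk⟩

theorem HasPivotingDominance.one_le_mul_norm_sq (hdom : HasPivotingDominance hmn R)
    (htrap : ∀ (l : Fin m) (k : Fin n), (k : ℕ) < (l : ℕ) → R l k = 0) (horth : R * Rᴴ = 1)
    (i : Fin m) : 1 ≤ ((n : ℝ) - m + 1) * ‖R i (Fin.castLE hmn i)‖ ^ 2 := by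
  have hm : 1 ≤ m := i.pos
  let q : Fin m := ⟨m - 1, by omega⟩
  have hlast := one_le_mul_sq_of_sum_norm_sq_eq_one
    (sum_norm_sq_eq_one_of_mul_conjTranspose_eq_one horth q) (i := Fin.castLE hmn q)
    (htrap q) (fun k hk => hdom.norm_le le_rfl hk)
  have hcard : ((n - (Fin.castLE hmn q : ℕ) : ℕ) : ℝ) = n - m + 1 := by
    rw [Fin.val_castLE, Nat.cast_sub (by omega), Nat.cast_sub hm]
    ring
  rw [hcard] at hlast
  refine hlast.trans (mul_le_mul_of_nonneg_left ?_ (by rw [← hcard]; positivity))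
  exact pow_le_pow_left₀ (norm_nonneg _) (hdom.norm_le (Nat.le_sub_one_of_lt i.isLt) le_rfl) 2

end Trapezoidal

/-- For upper trapezoidal `R` with orthonormal rows satisfying the pivoting
dominance property, the leading `m×m` block `T` is invertible and
`‖T⁻¹‖₂ ≤ √(n−m+1)·√(4^m+6m−1)/3`. -/
theorem trapezoidal_orthonormal_rows_inv_bound {m n : ℕ} (hmn : m ≤ n)
    (R : Matrix (Fin m) (Fin n) ℂ)
    (htrap : ∀ (l : Fin m) (k : Fin n), (k : ℕ) < (l : ℕ) → R l k = 0)
    (horth : R * Rᴴ = 1)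
    (hdom : ∀ (i : Fin m) (k : Fin n), (i : ℕ) ≤ (k : ℕ) →
      ∑ l ∈ Finset.univ.filter fun l : Fin m => (i : ℕ) ≤ (l : ℕ) ∧ (l : ℕ) ≤ (k : ℕ),
          ‖R l k‖ ^ 2 ≤ ‖R i (Fin.castLE hmn i)‖ ^ 2)
    (T : Matrix (Fin m) (Fin m) ℂ) (hT : T = Matrix.of fun i j => R i (Fin.castLE hmn j)) :
    IsUnit T ∧
      specNorm T⁻¹ ≤
        Real.sqrt ((n : ℝ) - m + 1) * (Real.sqrt ((4 : ℝ) ^ m + 6 * m - 1) / 3) := by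
  have hpiv : HasPivotingDominance hmn R := hdom
  have hTR : ∀ i j, T i j = R i (Fin.castLE hmn j) := fun i j => by rw [hT, of_apply]
  have hupper : T.IsUpperTriangular := fun i j hji => (hTR i j).trans (htrap i _ hji)
  have hrow : ∀ i l, i ≤ l → ‖T i l‖ ≤ ‖T i i‖ := fun i l hil => by
    simpa only [hTR] using hpiv.norm_le le_rfl hil
  have hpivot : ∀ i, 1 ≤ ((n : ℝ) - m + 1) * ‖T i i‖ ^ 2 := fun i => by
    simpa only [hTR] using hpiv.one_le_mul_norm_sq htrap horth i
  refine ⟨hupper.isUnit_of_diag_ne_zero fun i hi => absurd (hpivot i) (by simp [hi]), ?_⟩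
  have hK : (0 : ℝ) ≤ n - m + 1 := by linarith [(Nat.cast_le (α := ℝ)).2 hmn]
  calc specNorm T⁻¹ ≤ √(∑ i, ∑ j, ‖T⁻¹ i j‖ ^ 2) := specNorm_le_sqrt_sum_norm_sq _
    _ ≤ √(((n : ℝ) - m + 1) * ((4 ^ m + 6 * m - 1) / 9)) :=
      Real.sqrt_le_sqrt (hupper.sum_sum_norm_inv_apply_sq_le hrow hpivot)
    _ = √((n : ℝ) - m + 1) * (√((4 : ℝ) ^ m + 6 * m - 1) / 3) := by
      rw [Real.sqrt_mul hK, Real.sqrt_div' _ (by norm_num : (0 : ℝ) ≤ 9),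
        show (9 : ℝ) = 3 ^ 2 by norm_num, Real.sqrt_sq (by norm_num : (0 : ℝ) ≤ 3)]
end
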